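/- arXiv:1512.02648 — 2 statements merged into one kernel-verified Lean document; each statement's English description precedes it below -/
import Mathlib

section
/- A square matrix N ∈ M_n(k) is nilpotent if and only if det(I ⊗ I - T ⊗ N) ≠ 0 for all T ∈ M_n(k), where ⊗ denotes the Kronecker product. -/
open Kronecker Matrix

private lemma antitone_exists_eq (f : ℕ → ℕ) (hf : ∀ m, f (m + 1) ≤ f m) :
    ∃ m, f (m + 1) = f m := by
  by_contra h
  push_neg at h
  have hs : ∀ m, f (m + 1) < f m := fun m => lt_of_le_of_ne (hf m) (h m)
  have key : ∀ m, f m + m ≤ f 0 := by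
    intro m
    induction m with
    | zero => simp
    | succ p ih => have := hs p; omega
  have := key (f 0 + 1)
  omega

open Kronecker in
theorem nilpotent_iff_kronecker_det_ne_zero (k : Type*) [Field k] [CharZero k] (n : ℕ)
    (N : Matrix (Fin n) (Fin n) k) :
    IsNilpotent N ↔
      ∀ T : Matrix (Fin n) (Fin n) k,
        Matrix.det ((1 : Matrix (Fin n × Fin n) (Fin n × Fin n) k) - T ⊗ₖ N) ≠ 0 := by
  constructor
  · rintro ⟨p, hp⟩ T
    have hpow : ∀ q : ℕ, (T ⊗ₖ N) ^ q = (T ^ q) ⊗ₖ (N ^ q) := by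
      intro q
      induction q with
      | zero => simp [Matrix.one_kronecker_one]
      | succ q ih => rw [pow_succ, pow_succ, pow_succ, ih, Matrix.mul_kronecker_mul]
    have hnil : IsNilpotent (T ⊗ₖ N) := ⟨p, by rw [hpow, hp, Matrix.kronecker_zero]⟩
    have hu : IsUnit ((1 : Matrix (Fin n × Fin n) (Fin n × Fin n) k) - T ⊗ₖ N) :=
      hnil.isUnit_one_sub
    rw [Matrix.isUnit_iff_isUnit_det] at hu
    exact hu.ne_zero
  · intro H
    by_contra hN
    -- find m with range stabilization
    have hstep : ∀ i : ℕ, LinearMap.range (N ^ (i + 1)).mulVecLin ≤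
        LinearMap.range (N ^ i).mulVecLin := by
      intro i
      rw [pow_succ, Matrix.mulVecLin_mul]
      exact LinearMap.range_comp_le_range _ _
    obtain ⟨m, hm⟩ := antitone_exists_eq
      (fun i => Module.finrank k (LinearMap.range (N ^ i).mulVecLin))
      (fun i => Submodule.finrank_mono (hstep i))
    have hrange : LinearMap.range (N ^ (m + 1)).mulVecLin =
        LinearMap.range (N ^ m).mulVecLin :=
      Submodule.eq_of_le_of_finrank_le (hstep m) (le_of_eq hm.symm)
    -- choose S with N^(m+1) * S = N^m (columnwise)
    have hcol : ∀ j : Fin n, ∃ s : Fin n → k,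
        (N ^ (m + 1)).mulVec s = fun i => (N ^ m) i j := by
      intro j
      have hmem : (fun i => (N ^ m) i j) ∈ LinearMap.range (N ^ (m + 1)).mulVecLin := by
        rw [hrange]
        exact ⟨Pi.single j 1, by
          ext i
          simp [Matrix.mulVecLin_apply, Matrix.mulVec_single]⟩
      obtain ⟨s, hs⟩ := hmem
      exact ⟨s, hs⟩
    choose S hS using hcol
    have hNS : N ^ (m + 1) * (Matrix.of fun i j => S j i) = N ^ m := by
      ext i j
      have := congrFun (hS j) i
      simpa [Matrix.mulVec, Matrix.mul_apply, dotProduct] using this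
    have hXne : (N ^ m)ᵀ ≠ 0 := by
      intro h
      apply hN
      refine ⟨m, ?_⟩
      calc N ^ m = ((N ^ m)ᵀ)ᵀ := by rw [Matrix.transpose_transpose]
        _ = 0 := by rw [h]; simp
    have hfix : (Matrix.of fun i j => S j i)ᵀ * (N ^ m)ᵀ * Nᵀ = (N ^ m)ᵀ := by
      have key : N * (N ^ m * Matrix.of fun i j => S j i) = N ^ m := by
        calc N * (N ^ m * Matrix.of fun i j => S j i)
            = N * N ^ m * Matrix.of fun i j => S j i := by rw [Matrix.mul_assoc]
          _ = N ^ (m + 1) * Matrix.of fun i j => S j i := by rw [← pow_succ']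
          _ = N ^ m := hNS
      rw [← Matrix.transpose_mul, ← Matrix.transpose_mul, key]
    -- now det = 0
    apply H ((Matrix.of fun i j => S j i)ᵀ)
    rw [← Matrix.exists_mulVec_eq_zero_iff]
    refine ⟨fun p => (N ^ m)ᵀ p.1 p.2, ?_, ?_⟩
    · intro h
      apply hXne
      ext i j
      exact congrFun h (i, j)
    · set T : Matrix (Fin n) (Fin n) k := (Matrix.of fun i j => S j i)ᵀ
      set X : Matrix (Fin n) (Fin n) k := (N ^ m)ᵀ
      ext ⟨i, j⟩
      have hk : ((T ⊗ₖ N).mulVec fun p => X p.1 p.2) (i, j) = (T * X * Nᵀ) i j := by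
        simp only [Matrix.mulVec, dotProduct, Matrix.kroneckerMap_apply,
          Fintype.sum_prod_type, Matrix.mul_apply, Matrix.transpose_apply, Finset.sum_mul]
        rw [Finset.sum_comm]
        exact Finset.sum_congr rfl fun j' _ =>
          Finset.sum_congr rfl fun i' _ => by ring
      rw [Matrix.sub_mulVec, Pi.sub_apply, hk, hfix, Matrix.one_mulVec, sub_self,
        Pi.zero_apply]
end

section
/- Let p ∈ ℝ[u₁,…,u_g] be a real zero (RZ) polynomial: p(0) ≠ 0 and for every α ∈ ℝ^g the univariate polynomial p(tα) ∈ ℝ[t] has only real roots. Let q ∈ ℂ[u₁,…,u_g]. If q(α) = 0 whenever p(α) = 0 for all α ∈ ℝ^g, then q(α) = 0 whenever p(α) = 0 for all α ∈ ℂ^g. -/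
/-!
Restricting to the real plane spanned by the real and imaginary parts of a complex zero `α` of `p`
reduces the claim to two variables, `α` becoming the point `(1, i)`. There, take an irreducible
factor `h` of the restriction of `p` that vanishes at `(1, i)`. As a factor of a real zero
polynomial, `h` is real zero and nonconstant, so on all but finitely many real lines through the
origin it has a zero, which is real: `h` has infinitely many real zeros. These are zeros of `q`,
and an irreducible plane curve meeting another curve in infinitely many points is one of its
components (a resultant argument), so `h ∣ q` and `q` vanishes at `(1, i)`.
-/

open Polynomial Polynomial.Bivariate

theorem UniqueFactorizationMonoid.exists_prime_dvd_of_map_eq_zero {M S F : Type*}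
    [CommMonoidWithZero M] [UniqueFactorizationMonoid M] [MonoidWithZero S] [NoZeroDivisors S]
    [Nontrivial S] [FunLike F M S] [MonoidWithZeroHomClass F M S] (φ : F) {a : M} (ha : a ≠ 0)
    (h : φ a = 0) : ∃ p, Prime p ∧ p ∣ a ∧ φ p = 0 := by
  induction a using UniqueFactorizationMonoid.induction_on_prime with
  | h₁ => exact absurd rfl ha
  | h₂ x hx => exact absurd h (hx.map φ).ne_zero
  | h₃ a p ha0 hp ih =>
    rcases mul_eq_zero.mp ((map_mul φ p a).symm.trans h) with hp0 | ha0'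
    · exact ⟨p, hp, dvd_mul_right p a, hp0⟩
    · obtain ⟨q, hq, hqa, hq0⟩ := ih ha0 ha0'
      exact ⟨q, hq, hqa.mul_left p, hq0⟩

theorem Set.Infinite.exists_infinite_fiber_fst {α β : Type*} {Z : Set (α × β)}
    (hZ : Z.Infinite) (hfst : (Prod.fst '' Z).Finite) : ∃ a, {b | (a, b) ∈ Z}.Infinite := by
  by_contra! hfib
  refine hZ ((hfst.biUnion fun a _ => (hfib a).image (Prod.mk a)).subset ?_)
  rintro ⟨a, b⟩ hab
  exact Set.mem_biUnion ⟨_, hab, rfl⟩ ⟨b, hab, rfl⟩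

namespace Polynomial

theorem evalEval_eq_zero_of_dvd {R : Type*} [CommSemiring R] {p q : R[X][Y]} (hpq : p ∣ q)
    {u v : R} (hp : evalEval u v p = 0) : evalEval u v q = 0 :=
  zero_dvd_iff.mp (hp ▸ evalEval_dvd u v hpq)

section IsDomain

variable {R : Type*} [CommRing R] [IsDomain R]

theorem C_X_sub_C_dvd_of_infinite_setOf_evalEval_eq_zero {f : R[X][Y]} {u : R}
    (hf : {v | evalEval u v f = 0}.Infinite) : C (X - C u) ∣ f := by
  have hmap : f.map (evalRingHom u) = 0 :=
    eq_zero_of_infinite_isRoot _ (by simpa only [IsRoot, map_evalRingHom_eval] using hf)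
  refine (C_dvd_iff_dvd_coeff _ _).mpr fun i => dvd_iff_isRoot.mpr ?_
  simpa using congr_arg (coeff · i) hmap

theorem eq_zero_of_forall_evalEval_eq_zero [Infinite R] {f : R[X][Y]}
    (hf : ∀ u v, evalEval u v f = 0) : f = 0 := by
  have hmap (u : R) : f.map (evalRingHom u) = 0 :=
    funext fun v => by simpa only [map_evalRingHom_eval, eval_zero] using hf u v
  ext1 i
  refine funext fun u => ?_
  simpa using congr_arg (coeff · i) (hmap u)

end IsDomain

section Field

variable {k : Type*} [Field k]

/-- `d` is the resultant in `Y`; it is nonzero because, by Gauss's lemma, `h` and `G` stay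
coprime over the fraction field of `k[X]`. -/
theorem exists_mul_add_mul_eq_C_of_not_dvd {h G : k[X][Y]} (hh : Irreducible h)
    (hdeg : h.natDegree ≠ 0) (hG : ¬h ∣ G) :
    ∃ d : k[X], d ≠ 0 ∧ ∃ a b : k[X][Y], h * a + G * b = C d := by
  obtain ⟨a, b, -, -, hab⟩ := exists_mul_add_mul_eq_C_resultant h G le_rfl le_rfl (.inl hdeg)
  refine ⟨_, fun hres => hG ?_, a, b, hab⟩
  let K := FractionRing k[X]
  have hinj : Function.Injective (algebraMap k[X] K) := IsFractionRing.injective _ _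
  have hprim := hh.isPrimitive hdeg
  refine hprim.dvd_of_fraction_map_dvd_fraction_map (K := K) (not_not.mp fun hnd => ?_)
  have hcop :=
    (hprim.irreducible_iff_irreducible_map_fraction_map.mp hh).coprime_iff_not_dvd.mpr hnd
  refine resultant_ne_zero _ _ hcop ?_
  rw [natDegree_map_eq_of_injective hinj, natDegree_map_eq_of_injective hinj, resultant_map_map,
    hres, map_zero]

theorem _root_.Irreducible.dvd_of_infinite_setOf_evalEval_eq_zero {h G : k[X][Y]}
    (hh : Irreducible h)
    (hZ : {z : k × k | evalEval z.1 z.2 h = 0 ∧ evalEval z.1 z.2 G = 0}.Infinite) : h ∣ G := by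
  set Z := {z : k × k | evalEval z.1 z.2 h = 0 ∧ evalEval z.1 z.2 G = 0}
  by_cases hfst : (Prod.fst '' Z).Finite
  · obtain ⟨u, hu⟩ := hZ.exists_infinite_fiber_fst hfst
    have hline : Irreducible (C (X - C u) : k[X][Y]) :=
      (prime_C_iff.mpr (prime_X_sub_C u)).irreducible
    have hdvd_h : C (X - C u) ∣ h :=
      C_X_sub_C_dvd_of_infinite_setOf_evalEval_eq_zero (hu.mono fun _ hv => hv.1)
    have hdvd_G : C (X - C u) ∣ G :=
      C_X_sub_C_dvd_of_infinite_setOf_evalEval_eq_zero (hu.mono fun _ hv => hv.2)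
    exact (hline.dvd_symm hh hdvd_h).trans hdvd_G
  · have hvanish (d : k[X]) (hd : ∀ z ∈ Z, d.eval z.1 = 0) : d = 0 :=
      eq_zero_of_infinite_isRoot d
        (Set.Infinite.mono (by rintro _ ⟨z, hz, rfl⟩; exact hd z hz) hfst)
    have hdeg : h.natDegree ≠ 0 := by
      intro h0
      obtain ⟨w, rfl⟩ := natDegree_eq_zero.mp h0
      have hw : w = 0 := hvanish w fun z hz => by simpa only [evalEval_C] using hz.1
      exact hh.ne_zero (by simp [hw])
    by_contra hG
    obtain ⟨d, hd, a, b, hab⟩ := exists_mul_add_mul_eq_C_of_not_dvd hh hdeg hG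
    refine hd (hvanish d fun z hz => ?_)
    simpa [evalEval_C, evalEval_add, evalEval_mul, hz.1, hz.2] using
      congr_arg (evalEval z.1 z.2) hab.symm

end Field

section SlopeSubst

/-- `f(Y, X * Y)`: specialising `X` to a slope `b` leaves the restriction of `f` to the line
through the origin of slope `b`, as a polynomial in `Y`. -/
noncomputable def slopeSubst {R : Type*} [CommRing R] (f : R[X][Y]) : R[X][Y] :=
  aevalAeval Y (C X * Y) f

theorem evalEval_slopeSubst {R : Type*} [CommRing R] (b t : R) (f : R[X][Y]) :
    evalEval b t (slopeSubst f) = evalEval t (b * t) f := by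
  have : (aevalAeval b t).comp (aevalAeval (R := R) Y (C X * Y)) = aevalAeval t (b * t) :=
    (aevalAevalEquiv R R).symm.injective (by simp; exact mul_comm t b)
  rw [slopeSubst, ← coe_aevalAeval_eq_evalEval, ← coe_aevalAeval_eq_evalEval, ← this]
  rfl

theorem eq_CC_of_natDegree_slopeSubst_eq_zero {k : Type*} [Field k] [Infinite k] {f : k[X][Y]}
    (hf : (slopeSubst f).natDegree = 0) : f = CC (evalEval 0 0 f) := by
  have hlines (b t : k) : evalEval t (b * t) f = evalEval 0 0 f :=
    calc evalEval t (b * t) f = evalEval b t (slopeSubst f) := (evalEval_slopeSubst b t f).symm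
      _ = evalEval b 0 (slopeSubst f) := by
        rw [eq_C_of_natDegree_eq_zero hf]; simp only [evalEval_C]
      _ = evalEval 0 0 f := by rw [evalEval_slopeSubst, mul_zero]
  rw [← sub_eq_zero]
  refine (mul_eq_zero.mp (eq_zero_of_forall_evalEval_eq_zero fun u v => ?_)).resolve_left
    (C_ne_zero.mpr X_ne_zero)
  rcases eq_or_ne u 0 with rfl | hu
  · simp [evalEval_mul, evalEval_C]
  · rw [evalEval_mul, evalEval_sub, ← div_mul_cancel₀ v hu, hlines, evalEval_CC, sub_self,
      mul_zero]

end SlopeSubst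

def IsRealZero (F : ℂ[X][Y]) : Prop :=
  evalEval 0 0 F ≠ 0 ∧ ∀ (a b : ℝ) (t : ℂ), evalEval (t * a) (t * b) F = 0 → t.im = 0

namespace IsRealZero

theorem of_dvd {F h : ℂ[X][Y]} (hF : IsRealZero F) (hdvd : h ∣ F) : IsRealZero h :=
  ⟨fun h0 => hF.1 (evalEval_eq_zero_of_dvd hdvd h0),
    fun a b t ht => hF.2 a b t (evalEval_eq_zero_of_dvd hdvd ht)⟩

theorem infinite_setOf_real_zeros {h : ℂ[X][Y]} (hh : IsRealZero h) (hunit : ¬IsUnit h) :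
    {z : ℝ × ℝ | evalEval (z.1 : ℂ) z.2 h = 0}.Infinite := by
  have hdeg : (slopeSubst h).natDegree ≠ 0 := fun h0 =>
    hunit (eq_CC_of_natDegree_slopeSubst_eq_zero h0 ▸ isUnit_C.mpr (isUnit_C.mpr hh.1.isUnit))
  set c := (slopeSubst h).leadingCoeff
  have hc : c ≠ 0 := leadingCoeff_ne_zero.mpr (by rintro h0; simp [h0] at hdeg)
  have hslopes : {b : ℝ | c.eval (b : ℂ) ≠ 0}.Infinite :=
    ((finite_setOfPred_isRoot hc).preimage Complex.ofReal_injective.injOn).infinite_compl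
  refine Set.Infinite.of_image (fun z => z.2 / z.1) (hslopes.mono fun b hb => ?_)
  have hpos : 0 < ((slopeSubst h).map (evalRingHom (b : ℂ))).degree := by
    rw [← natDegree_pos_iff_degree_pos, natDegree_map_of_leadingCoeff_ne_zero _ (by exact hb)]
    exact Nat.pos_of_ne_zero hdeg
  obtain ⟨τ, hτ⟩ := Complex.exists_root hpos
  have hzero : evalEval τ (b * τ) h = 0 := by
    rwa [IsRoot, map_evalRingHom_eval, evalEval_slopeSubst] at hτ
  have hreal : τ.im = 0 := hh.2 1 b τ (by simpa [mul_comm] using hzero)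
  obtain ⟨r, rfl⟩ : ∃ r : ℝ, (r : ℂ) = τ :=
    ⟨τ.re, Complex.ext rfl (by simp [hreal])⟩
  have hr : r ≠ 0 := by rintro rfl; exact hh.1 (by simpa using hzero)
  exact ⟨(r, b * r), by simpa using hzero, by simp [hr]⟩

theorem evalEval_eq_zero_of_forall_real {F G : ℂ[X][Y]} (hF : IsRealZero F)
    (hG : ∀ u v : ℝ, evalEval (u : ℂ) v F = 0 → evalEval (u : ℂ) v G = 0) {z w : ℂ}
    (hzw : evalEval z w F = 0) : evalEval z w G = 0 := by
  have hF0 : F ≠ 0 := by rintro rfl; exact hF.1 (evalEval_zero 0 0)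
  obtain ⟨h, hprime, hdvd, hh0⟩ :=
    UniqueFactorizationMonoid.exists_prime_dvd_of_map_eq_zero (evalEvalRingHom z w) hF0 hzw
  suffices h ∣ G from evalEval_eq_zero_of_dvd this hh0
  have hinj : Function.Injective (Prod.map ((↑) : ℝ → ℂ) ((↑) : ℝ → ℂ)) :=
    Complex.ofReal_injective.prodMap Complex.ofReal_injective
  refine hprime.irreducible.dvd_of_infinite_setOf_evalEval_eq_zero
    ((((hF.of_dvd hdvd).infinite_setOf_real_zeros hprime.not_isUnit).image hinj.injOn).mono ?_)
  rintro _ ⟨⟨u, v⟩, huv, rfl⟩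
  exact ⟨huv, hG u v (evalEval_eq_zero_of_dvd hdvd huv)⟩

end IsRealZero

end Polynomial

namespace MvPolynomial

variable {ι k : Type*} [CommRing k]

noncomputable def restrictPlane (x y : ι → k) : MvPolynomial ι k →ₐ[k] k[X][Y] :=
  aeval fun i => CC (x i) * Polynomial.C Polynomial.X + CC (y i) * Y

theorem evalEval_restrictPlane (x y : ι → k) (u v : k) (r : MvPolynomial ι k) :
    evalEval u v (restrictPlane x y r) = eval (fun i => x i * u + y i * v) r := by
  rw [← coe_aevalAeval_eq_evalEval, restrictPlane, ← AlgHom.comp_apply, comp_aeval,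
    ← coe_aeval_eq_eval]
  simp

theorem evalEval_restrictPlane_ofReal (x y : ι → ℝ) (u v : ℝ) (r : MvPolynomial ι ℂ) :
    evalEval (u : ℂ) v (restrictPlane (fun i => (x i : ℂ)) (fun i => (y i : ℂ)) r) =
      eval (fun i => ((u • x + v • y) i : ℂ)) r := by
  rw [evalEval_restrictPlane]
  congr
  funext i
  simp [mul_comm]

theorem eval_ofReal_map (p : MvPolynomial ι ℝ) (β : ι → ℝ) :
    eval (fun i => (β i : ℂ)) (p.map (algebraMap ℝ ℂ)) = eval β p :=
  (eval_map _ _ _).trans (eval₂_comp_left (algebraMap ℝ ℂ) (RingHom.id ℝ) β p).symm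

def IsRealZero (p : MvPolynomial ι ℝ) : Prop :=
  eval 0 p ≠ 0 ∧
    ∀ (α : ι → ℝ) (t : ℂ),
      eval (fun i => t * (α i : ℂ)) (p.map (algebraMap ℝ ℂ)) = 0 → t.im = 0

theorem IsRealZero.restrictPlane {p : MvPolynomial ι ℝ} (hp : p.IsRealZero) (x y : ι → ℝ) :
    (restrictPlane (fun i => (x i : ℂ)) (fun i => (y i : ℂ))
      (p.map (algebraMap ℝ ℂ))).IsRealZero := by
  refine ⟨?_, fun a b t ht => hp.2 (a • x + b • y) t ?_⟩
  · rw [← Complex.ofReal_zero, evalEval_restrictPlane_ofReal, eval_ofReal_map]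
    simpa using hp.1
  · have hline : (fun i => (x i : ℂ) * (t * a) + y i * (t * b)) =
        fun i => t * ((a • x + b • y) i : ℂ) := by
      funext i; simp; ring
    rwa [evalEval_restrictPlane, hline] at ht

end MvPolynomial

open MvPolynomial in
/-- Real zeros of a real zero polynomial control complex zeros. -/
theorem RZ_nullstellensatz (g : ℕ) (p : MvPolynomial (Fin g) ℝ)
    (hp0 : eval (0 : Fin g → ℝ) p ≠ 0)
    (hRZ : ∀ (α : Fin g → ℝ) (t : ℂ),
      eval (fun i => t * (α i : ℂ)) (p.map (algebraMap ℝ ℂ)) = 0 → t.im = 0)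
    (q : MvPolynomial (Fin g) ℂ)
    (hq : ∀ α : Fin g → ℝ, eval α p = 0 → eval (fun i => (α i : ℂ)) q = 0) :
    ∀ α : Fin g → ℂ, eval α (p.map (algebraMap ℝ ℂ)) = 0 → eval α q = 0 := by
  intro α hα
  let x : Fin g → ℝ := fun i => (α i).re
  let y : Fin g → ℝ := fun i => (α i).im
  have hα' : (fun i => (x i : ℂ) * 1 + y i * Complex.I) = α := by
    funext i; simp [x, y]
  have hF := IsRealZero.restrictPlane (p := p) ⟨hp0, hRZ⟩ x y
  have hG := hF.evalEval_eq_zero_of_forall_real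
    (G := restrictPlane (fun i => (x i : ℂ)) (fun i => (y i : ℂ)) q) (z := 1) (w := Complex.I)
    (fun u v huv => ?_) (by rwa [evalEval_restrictPlane, hα'])
  · rwa [evalEval_restrictPlane, hα'] at hG
  · rw [evalEval_restrictPlane_ofReal, eval_ofReal_map] at huv
    rw [evalEval_restrictPlane_ofReal]
    exact hq _ (by exact_mod_cast huv)
end
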